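/- Let n ≥ 1, let ω₀ be the standard symplectic bilinear form on ℝ^{2n} = ℝⁿ × ℝⁿ, ω₀((x,ξ),(y,η)) = ⟨x,η⟩ − ⟨ξ,y⟩, let U ⊆ ℝ^{2n} be an open convex set, and let y, z ∈ U. Then there exists a C^∞ diffeomorphism φ : ℝ^{2n} → ℝ^{2n} such that φ(y) = z, the set {x ∈ ℝ^{2n} : φ(x) ≠ x} has compact closure contained in U, and φ is a symplectomorphism: for every x ∈ ℝ^{2n} and all u, v ∈ ℝ^{2n}, ω₀(Dφ(x)u, Dφ(x)v) = ω₀(u, v), where Dφ(x) is the derivative of φ at x. -/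

import Mathlib

noncomputable section

/-- The standard symplectic bilinear form on `ℝ^{2n} = ℝⁿ × ℝⁿ`:
`ω₀((x,ξ),(y,η)) = ⟨x,η⟩ − ⟨ξ,y⟩`. -/
def omega0 (n : ℕ) (p q : (Fin n → ℝ) × (Fin n → ℝ)) : ℝ :=
  (∑ i, p.1 i * q.2 i) - ∑ i, p.2 i * q.1 i

namespace SympAux

variable {n : ℕ}

abbrev E (n : ℕ) := (Fin n → ℝ) × (Fin n → ℝ)

def Jmap : E n →L[ℝ] E n :=
  (-(ContinuousLinearMap.snd ℝ (Fin n → ℝ) (Fin n → ℝ))).prod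
    (ContinuousLinearMap.fst ℝ (Fin n → ℝ) (Fin n → ℝ))

@[simp] lemma Jmap_apply (p : E n) : Jmap p = (-p.2, p.1) := rfl

def Q (p : E n) : ℝ := (∑ i, p.1 i * p.1 i) + ∑ i, p.2 i * p.2 i

def ip (q u : E n) : ℝ := (∑ i, u.1 i * q.1 i) + ∑ i, u.2 i * q.2 i

def rot (θ : ℝ) (p : E n) : E n := Real.cos θ • p + Real.sin θ • Jmap p

@[simp] lemma rot_fst (θ : ℝ) (p : E n) (i : Fin n) :
    (rot θ p).1 i = Real.cos θ * p.1 i - Real.sin θ * p.2 i := by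
  simp [rot, sub_eq_add_neg]

@[simp] lemma rot_snd (θ : ℝ) (p : E n) (i : Fin n) :
    (rot θ p).2 i = Real.sin θ * p.1 i + Real.cos θ * p.2 i := by
  simp [rot, add_comm]

lemma omega_rot (θ : ℝ) (u v : E n) :
    omega0 n (rot θ u) (rot θ v) = omega0 n u v := by
  unfold omega0
  rw [← Finset.sum_sub_distrib, ← Finset.sum_sub_distrib]
  refine Finset.sum_congr rfl fun i _ => ?_
  simp only [rot_fst, rot_snd]
  linear_combination (u.1 i * v.2 i - u.2 i * v.1 i) * Real.sin_sq_add_cos_sq θ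

lemma Q_rot (θ : ℝ) (p : E n) : Q (rot θ p) = Q p := by
  unfold Q
  rw [← Finset.sum_add_distrib, ← Finset.sum_add_distrib]
  refine Finset.sum_congr rfl fun i _ => ?_
  simp only [rot_fst, rot_snd]
  linear_combination (p.1 i * p.1 i + p.2 i * p.2 i) * Real.sin_sq_add_cos_sq θ

lemma rot_zero (p : E n) : rot 0 p = p := by simp [rot]

lemma rot_rot (θ θ' : ℝ) (p : E n) : rot θ (rot θ' p) = rot (θ + θ') p := by
  refine Prod.ext ?_ ?_ <;> funext i <;>
    simp only [rot_fst, rot_snd, Real.cos_add, Real.sin_add] <;> ring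

lemma rot_pi (p : E n) : rot Real.pi p = -p := by
  simp [rot]

lemma omega0_eq_sum (u v : E n) :
    omega0 n u v = ∑ i, (u.1 i * v.2 i - u.2 i * v.1 i) := by
  rw [omega0, Finset.sum_sub_distrib]

lemma ip_eq_sum (q u : E n) :
    ip q u = ∑ i, (u.1 i * q.1 i + u.2 i * q.2 i) := by
  rw [ip, Finset.sum_add_distrib]

lemma rot_add (θ : ℝ) (p q : E n) : rot θ (p + q) = rot θ p + rot θ q := by
  refine Prod.ext ?_ ?_ <;> funext i <;>
    simp only [Prod.fst_add, Prod.snd_add, Pi.add_apply, rot_fst, rot_snd] <;> ring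

lemma rot_smul (θ t : ℝ) (p : E n) : rot θ (t • p) = t • rot θ p := by
  refine Prod.ext ?_ ?_ <;> funext i <;>
    simp only [Prod.smul_fst, Prod.smul_snd, Pi.smul_apply, smul_eq_mul, rot_fst, rot_snd] <;> ring

lemma omega_add_left (p p' q : E n) :
    omega0 n (p + p') q = omega0 n p q + omega0 n p' q := by
  simp only [omega0_eq_sum, ← Finset.sum_add_distrib]
  exact Finset.sum_congr rfl fun i _ => by simp only [Prod.fst_add, Prod.snd_add, Pi.add_apply]; ring

lemma omega_add_right (p q q' : E n) :
    omega0 n p (q + q') = omega0 n p q + omega0 n p q' := by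
  simp only [omega0_eq_sum, ← Finset.sum_add_distrib]
  exact Finset.sum_congr rfl fun i _ => by simp only [Prod.fst_add, Prod.snd_add, Pi.add_apply]; ring

lemma omega_smul_left (t : ℝ) (p q : E n) :
    omega0 n (t • p) q = t * omega0 n p q := by
  simp only [omega0_eq_sum, Finset.mul_sum]
  exact Finset.sum_congr rfl fun i _ => by simp only [Prod.smul_fst, Prod.smul_snd, Pi.smul_apply, smul_eq_mul]; ring

lemma omega_smul_right (t : ℝ) (p q : E n) :
    omega0 n p (t • q) = t * omega0 n p q := by
  simp only [omega0_eq_sum, Finset.mul_sum]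
  exact Finset.sum_congr rfl fun i _ => by simp only [Prod.smul_fst, Prod.smul_snd, Pi.smul_apply, smul_eq_mul]; ring

lemma omega_J_right (q u : E n) : omega0 n u (Jmap q) = ip q u := by
  simp only [omega0_eq_sum, ip_eq_sum, Jmap_apply]
  exact Finset.sum_congr rfl fun i _ => by simp only [Pi.neg_apply]; ring

lemma omega_J_left (q v : E n) : omega0 n (Jmap q) v = -ip q v := by
  simp only [omega0_eq_sum, ip_eq_sum, Jmap_apply, ← Finset.sum_neg_distrib]
  exact Finset.sum_congr rfl fun i _ => by simp only [Pi.neg_apply]; ring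

lemma ip_J_self (q : E n) : ip q (Jmap q) = 0 := by
  have : ip q (Jmap q) = ∑ (_i : Fin n), (0:ℝ) := by
    simp only [ip_eq_sum, Jmap_apply]
    exact Finset.sum_congr rfl fun i _ => by simp only [Pi.neg_apply]; ring
  rw [this, Finset.sum_const, smul_zero]

lemma omega_shear (κ : ℝ) (q u v : E n) :
    omega0 n (u + (κ * ip q u) • Jmap q) (v + (κ * ip q v) • Jmap q)
      = omega0 n u v := by
  have hJJ : omega0 n (Jmap q) (Jmap (q : E n)) = 0 := by
    rw [omega_J_left, ip_J_self, neg_zero]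
  rw [omega_add_left, omega_add_right, omega_add_right, omega_smul_left,
    omega_smul_left, omega_smul_right, omega_smul_right, omega_J_right,
    omega_J_left, hJJ]
  ring


def c1 (i : Fin n) : E n →L[ℝ] ℝ :=
  (ContinuousLinearMap.proj i).comp (ContinuousLinearMap.fst ℝ (Fin n → ℝ) (Fin n → ℝ))

def c2 (i : Fin n) : E n →L[ℝ] ℝ :=
  (ContinuousLinearMap.proj i).comp (ContinuousLinearMap.snd ℝ (Fin n → ℝ) (Fin n → ℝ))

@[simp] lemma c1_apply (i : Fin n) (p : E n) : c1 i p = p.1 i := rfl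
@[simp] lemma c2_apply (i : Fin n) (p : E n) : c2 i p = p.2 i := rfl

def dQ (q : E n) : E n →L[ℝ] ℝ :=
  (∑ i, (q.1 i • c1 i + q.1 i • c1 i)) + ∑ i, (q.2 i • c2 i + q.2 i • c2 i)

lemma hasFDerivAt_Q (q : E n) : HasFDerivAt Q (dQ q) q := by
  have h1 : ∀ i : Fin n, HasFDerivAt (fun p : E n => p.1 i * p.1 i)
      (q.1 i • c1 i + q.1 i • c1 i) q := fun i =>
    ((c1 i).hasFDerivAt (x := q)).mul ((c1 i).hasFDerivAt (x := q))
  have h2 : ∀ i : Fin n, HasFDerivAt (fun p : E n => p.2 i * p.2 i)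
      (q.2 i • c2 i + q.2 i • c2 i) q := fun i =>
    ((c2 i).hasFDerivAt (x := q)).mul ((c2 i).hasFDerivAt (x := q))
  have := (HasFDerivAt.fun_sum (u := Finset.univ) fun i _ => h1 i).add
    (HasFDerivAt.fun_sum (u := Finset.univ) fun i _ => h2 i)
  exact this

lemma dQ_apply (q u : E n) : dQ q u = 2 * ip q u := by
  simp only [dQ, ContinuousLinearMap.add_apply, ContinuousLinearMap.sum_apply,
    ContinuousLinearMap.smul_apply, c1_apply, c2_apply, smul_eq_mul,
    ip_eq_sum, Finset.mul_sum, ← Finset.sum_add_distrib]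
  exact Finset.sum_congr rfl fun i _ => by ring

lemma contDiff_Q : ContDiff ℝ (⊤ : ℕ∞) (Q (n := n)) := by
  have h1 : ∀ i : Fin n, ContDiff ℝ (⊤ : ℕ∞) (fun p : E n => p.1 i * p.1 i) := fun i =>
    ((c1 i).contDiff).mul ((c1 i).contDiff)
  have h2 : ∀ i : Fin n, ContDiff ℝ (⊤ : ℕ∞) (fun p : E n => p.2 i * p.2 i) := fun i =>
    ((c2 i).contDiff).mul ((c2 i).contDiff)
  exact (ContDiff.sum fun i _ => h1 i).add (ContDiff.sum fun i _ => h2 i)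

lemma Q_nonneg (p : E n) : 0 ≤ Q p :=
  add_nonneg (Finset.sum_nonneg fun i _ => mul_self_nonneg _)
    (Finset.sum_nonneg fun i _ => mul_self_nonneg _)

lemma sq_fst_le_Q (p : E n) (i : Fin n) : p.1 i * p.1 i ≤ Q p := by
  have h : p.1 i * p.1 i ≤ ∑ j, p.1 j * p.1 j := Finset.single_le_sum
    (f := fun j => p.1 j * p.1 j) (fun j _ => mul_self_nonneg _) (Finset.mem_univ i)
  have h2 : (0:ℝ) ≤ ∑ j, p.2 j * p.2 j := Finset.sum_nonneg fun j _ => mul_self_nonneg _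
  unfold Q; linarith

lemma sq_snd_le_Q (p : E n) (i : Fin n) : p.2 i * p.2 i ≤ Q p := by
  have h : p.2 i * p.2 i ≤ ∑ j, p.2 j * p.2 j := Finset.single_le_sum
    (f := fun j => p.2 j * p.2 j) (fun j _ => mul_self_nonneg _) (Finset.mem_univ i)
  have h1 : (0:ℝ) ≤ ∑ j, p.1 j * p.1 j := Finset.sum_nonneg fun j _ => mul_self_nonneg _
  unfold Q; linarith

lemma norm_le_sqrt_Q (p : E n) : ‖p‖ ≤ Real.sqrt (Q p) := by
  have hs : (0:ℝ) ≤ Real.sqrt (Q p) := Real.sqrt_nonneg _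
  have key : ∀ (t : ℝ), t * t ≤ Q p → |t| ≤ Real.sqrt (Q p) := by
    intro t ht
    have : Real.sqrt (t * t) ≤ Real.sqrt (Q p) := Real.sqrt_le_sqrt ht
    rwa [Real.sqrt_mul_self_eq_abs] at this
  rw [Prod.norm_def, sup_le_iff]
  constructor
  · rw [pi_norm_le_iff_of_nonneg hs]
    intro i
    exact key _ (sq_fst_le_Q p i)
  · rw [pi_norm_le_iff_of_nonneg hs]
    intro i
    exact key _ (sq_snd_le_Q p i)

lemma Q_le_norm (p : E n) : Q p ≤ 2 * n * (‖p‖ * ‖p‖) := by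
  have habs : ∀ (t : ℝ) (h : |t| ≤ ‖p‖), t * t ≤ ‖p‖ * ‖p‖ := by
    intro t ht
    have := abs_nonneg t
    nlinarith [abs_nonneg t, sq_abs t]
  have h1 : ∀ i : Fin n, p.1 i * p.1 i ≤ ‖p‖ * ‖p‖ := by
    intro i
    refine habs _ ?_
    calc |p.1 i| = ‖p.1 i‖ := rfl
      _ ≤ ‖p.1‖ := norm_le_pi_norm p.1 i
      _ ≤ ‖p‖ := norm_fst_le p
  have h2 : ∀ i : Fin n, p.2 i * p.2 i ≤ ‖p‖ * ‖p‖ := by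
    intro i
    refine habs _ ?_
    calc |p.2 i| = ‖p.2 i‖ := rfl
      _ ≤ ‖p.2‖ := norm_le_pi_norm p.2 i
      _ ≤ ‖p‖ := norm_snd_le p
  have s1 : (∑ i, p.1 i * p.1 i) ≤ n * (‖p‖ * ‖p‖) := by
    calc (∑ i, p.1 i * p.1 i) ≤ ∑ _i : Fin n, (‖p‖ * ‖p‖) :=
      Finset.sum_le_sum fun i _ => h1 i
    _ = n * (‖p‖ * ‖p‖) := by rw [Finset.sum_const, Finset.card_univ, Fintype.card_fin,
        nsmul_eq_mul]
  have s2 : (∑ i, p.2 i * p.2 i) ≤ n * (‖p‖ * ‖p‖) := by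
    calc (∑ i, p.2 i * p.2 i) ≤ ∑ _i : Fin n, (‖p‖ * ‖p‖) :=
      Finset.sum_le_sum fun i _ => h2 i
    _ = n * (‖p‖ * ‖p‖) := by rw [Finset.sum_const, Finset.card_univ, Fintype.card_fin,
        nsmul_eq_mul]
  unfold Q; linarith

lemma Q_smul (t : ℝ) (p : E n) : Q (t • p) = t * t * Q p := by
  simp only [Q, Prod.smul_fst, Prod.smul_snd, Pi.smul_apply, smul_eq_mul, mul_add,
    Finset.mul_sum]
  congr 1 <;> exact Finset.sum_congr rfl fun i _ => by ring


def twist (g : ℝ → ℝ) (c : E n) (p : E n) : E n := c + rot (g (Q (p - c))) (p - c)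

lemma contDiff_twist (g : ℝ → ℝ) (hg : ContDiff ℝ (⊤ : ℕ∞) g) (c : E n) :
    ContDiff ℝ (⊤ : ℕ∞) (twist g c) := by
  have hsub : ContDiff ℝ (⊤ : ℕ∞) (fun p : E n => p - c) := contDiff_id.sub contDiff_const
  have hQ : ContDiff ℝ (⊤ : ℕ∞) (fun p : E n => g (Q (p - c))) :=
    hg.comp (contDiff_Q.comp hsub)
  have h1 : ContDiff ℝ (⊤ : ℕ∞) (fun p : E n => Real.cos (g (Q (p - c))) • (p - c)) :=
    (Real.contDiff_cos.comp hQ).smul hsub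
  have h2 : ContDiff ℝ (⊤ : ℕ∞) (fun p : E n => Real.sin (g (Q (p - c))) • Jmap (p - c)) :=
    (Real.contDiff_sin.comp hQ).smul (Jmap.contDiff.comp hsub)
  exact contDiff_const.add (h1.add h2)

lemma twist_hasFDerivAt (g : ℝ → ℝ) (hg : ContDiff ℝ (⊤ : ℕ∞) g) (c p : E n) :
    HasFDerivAt (twist g c)
      ((Real.cos (g (Q (p - c))) • ContinuousLinearMap.id ℝ (E n) +
        ((-Real.sin (g (Q (p - c)))) • (deriv g (Q (p - c)) • dQ (p - c))).smulRight (p - c)) +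
       (Real.sin (g (Q (p - c))) • (Jmap : E n →L[ℝ] E n) +
        ((Real.cos (g (Q (p - c)))) • (deriv g (Q (p - c)) • dQ (p - c))).smulRight
          (Jmap (p - c)))) p := by
  have hsub : HasFDerivAt (fun p : E n => p - c) (ContinuousLinearMap.id ℝ (E n)) p :=
    (hasFDerivAt_id p).sub_const c
  have hQ : HasFDerivAt (fun p : E n => Q (p - c)) (dQ (p - c)) p := by
    have := (hasFDerivAt_Q (p - c)).comp p hsub
    rw [ContinuousLinearMap.comp_id] at this
    exact this
  have hgd : HasDerivAt g (deriv g (Q (p - c))) (Q (p - c)) :=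
    ((hg.differentiable (by simp)) _).hasDerivAt
  have hθ : HasFDerivAt (fun p : E n => g (Q (p - c)))
      (deriv g (Q (p - c)) • dQ (p - c)) p := by
    exact hgd.comp_hasFDerivAt p hQ
  have hcos : HasFDerivAt (fun p : E n => Real.cos (g (Q (p - c))))
      ((-Real.sin (g (Q (p - c)))) • (deriv g (Q (p - c)) • dQ (p - c))) p := by
    exact (Real.hasDerivAt_cos (g (Q (p - c)))).comp_hasFDerivAt p hθ
  have hsin : HasFDerivAt (fun p : E n => Real.sin (g (Q (p - c))))
      ((Real.cos (g (Q (p - c)))) • (deriv g (Q (p - c)) • dQ (p - c))) p := by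
    exact (Real.hasDerivAt_sin (g (Q (p - c)))).comp_hasFDerivAt p hθ
  have hJ : HasFDerivAt (fun p : E n => Jmap (p - c)) (Jmap : E n →L[ℝ] E n) p := by
    have := (Jmap.hasFDerivAt (x := p - c)).comp p hsub
    rw [ContinuousLinearMap.comp_id] at this
    exact this
  have hA := hcos.smul hsub
  have hB := hsin.smul hJ
  have := (hA.add hB).const_add c
  exact this

lemma twist_fderiv_apply (g : ℝ → ℝ) (hg : ContDiff ℝ (⊤ : ℕ∞) g) (c p u : E n) :
    fderiv ℝ (twist g c) p u
      = rot (g (Q (p - c)))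
          (u + ((2 * deriv g (Q (p - c))) * ip (p - c) u) • Jmap (p - c)) := by
  rw [(twist_hasFDerivAt g hg c p).fderiv]
  simp only [ContinuousLinearMap.add_apply, ContinuousLinearMap.smul_apply,
    ContinuousLinearMap.smulRight_apply, ContinuousLinearMap.id_apply, smul_eq_mul,
    dQ_apply]
  rw [rot_add, rot_smul]
  unfold rot
  have hJJ : Jmap (Jmap (p - c)) = -(p - c) := by
    refine Prod.ext ?_ ?_ <;> simp
  rw [hJJ]
  module

lemma twist_omega (g : ℝ → ℝ) (hg : ContDiff ℝ (⊤ : ℕ∞) g) (c : E n) :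
    ∀ p u v, omega0 n (fderiv ℝ (twist g c) p u) (fderiv ℝ (twist g c) p v)
      = omega0 n u v := by
  intro p u v
  rw [twist_fderiv_apply g hg c p u, twist_fderiv_apply g hg c p v, omega_rot,
    omega_shear]

lemma twist_inv (g h : ℝ → ℝ) (hgh : ∀ s, h s = -(g s)) (c p : E n) :
    twist h c (twist g c p) = p := by
  unfold twist
  rw [add_sub_cancel_left, Q_rot, hgh, rot_rot, neg_add_cancel, rot_zero,
    add_sub_cancel]

lemma twist_eq_self (g : ℝ → ℝ) (c p : E n) (h : g (Q (p - c)) = 0) :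
    twist g c p = p := by
  unfold twist
  rw [h, rot_zero, add_sub_cancel]


lemma Q_pos (p : E n) (hp : p ≠ 0) : 0 < Q p := by
  have h : p.1 ≠ 0 ∨ p.2 ≠ 0 := by
    by_contra h
    push_neg at h
    exact hp (Prod.ext h.1 h.2)
  rcases h with h | h
  · obtain ⟨i, hi⟩ := Function.ne_iff.mp h
    have h1 : 0 < p.1 i * p.1 i := mul_self_pos.mpr hi
    exact lt_of_lt_of_le h1 (sq_fst_le_Q p i)
  · obtain ⟨i, hi⟩ := Function.ne_iff.mp h
    have h1 : 0 < p.2 i * p.2 i := mul_self_pos.mpr hi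
    exact lt_of_lt_of_le h1 (sq_snd_le_Q p i)

def P (n : ℕ) (U : Set (E n)) (y z : E n) : Prop :=
  ∃ φ ψ : E n → E n,
      ContDiff ℝ (⊤ : ℕ∞) φ ∧ ContDiff ℝ (⊤ : ℕ∞) ψ ∧
      (∀ x, ψ (φ x) = x) ∧ (∀ x, φ (ψ x) = x) ∧
      φ y = z ∧
      IsCompact (closure {x | φ x ≠ x}) ∧ closure {x | φ x ≠ x} ⊆ U ∧
      (∀ x u v, omega0 n (fderiv ℝ φ x u) (fderiv ℝ φ x v) = omega0 n u v)

lemma P_refl (U : Set (E n)) (y : E n) : P n U y y := by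
  refine ⟨id, id, contDiff_id, contDiff_id, fun x => rfl, fun x => rfl, rfl, ?_, ?_, ?_⟩
  · simp only [id, ne_eq, not_true_eq_false, Set.setOf_false, closure_empty]
    exact isCompact_empty
  · simp only [id, ne_eq, not_true_eq_false, Set.setOf_false, closure_empty]
    exact Set.empty_subset U
  · intro x u v
    rw [fderiv_id]
    rfl

lemma P_symm (U : Set (E n)) (y z : E n) (h : P n U y z) : P n U z y := by
  obtain ⟨φ, ψ, hφ, hψ, hψφ, hφψ, hyz, hcpt, hsubU, hω⟩ := h
  have hsupp : {x | ψ x ≠ x} ⊆ {x | φ x ≠ x} := by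
    intro x hx
    simp only [Set.mem_setOf_eq] at hx ⊢
    intro hfix
    apply hx
    calc ψ x = ψ (φ x) := by rw [hfix]
      _ = x := hψφ x
  have hc : closure {x | ψ x ≠ x} ⊆ closure {x | φ x ≠ x} := closure_mono hsupp
  refine ⟨ψ, φ, hψ, hφ, hφψ, hψφ, by rw [← hyz, hψφ], hcpt.of_isClosed_subset isClosed_closure hc,
    hc.trans hsubU, ?_⟩
  intro x u v
  have hφd := hφ.differentiable (by simp)
  have hψd := hψ.differentiable (by simp)
  have hkey : ∀ w, fderiv ℝ φ (ψ x) (fderiv ℝ ψ x w) = w := by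
    intro w
    have hcomp : fderiv ℝ (fun t => φ (ψ t)) x
        = (fderiv ℝ φ (ψ x)).comp (fderiv ℝ ψ x) :=
      fderiv_comp x (hφd _) (hψd _)
    have hid : fderiv ℝ (fun t => φ (ψ t)) x = ContinuousLinearMap.id ℝ (E n) := by
      have : (fun t => φ (ψ t)) = id := funext hφψ
      rw [this, fderiv_id]
    have := hid.symm.trans hcomp
    have := congrArg (fun L : E n →L[ℝ] E n => L w) this
    simpa using this.symm
  calc omega0 n (fderiv ℝ ψ x u) (fderiv ℝ ψ x v)
      = omega0 n (fderiv ℝ φ (ψ x) (fderiv ℝ ψ x u))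
          (fderiv ℝ φ (ψ x) (fderiv ℝ ψ x v)) := (hω (ψ x) _ _).symm
    _ = omega0 n u v := by rw [hkey u, hkey v]

lemma P_trans (U : Set (E n)) (x y z : E n) (h1 : P n U x y) (h2 : P n U y z) :
    P n U x z := by
  obtain ⟨φ₁, ψ₁, hφ₁, hψ₁, hψφ₁, hφψ₁, h₁, hcpt₁, hsub₁, hω₁⟩ := h1
  obtain ⟨φ₂, ψ₂, hφ₂, hψ₂, hψφ₂, hφψ₂, h₂, hcpt₂, hsub₂, hω₂⟩ := h2
  have hφd₁ := hφ₁.differentiable (by simp)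
  have hφd₂ := hφ₂.differentiable (by simp)
  have hsupp : {t | φ₂ (φ₁ t) ≠ t} ⊆ {t | φ₁ t ≠ t} ∪ {t | φ₂ t ≠ t} := by
    intro t ht
    simp only [Set.mem_setOf_eq, Set.mem_union] at ht ⊢
    by_contra hcon
    push_neg at hcon
    rw [hcon.1, hcon.2] at ht
    exact ht rfl
  have hc : closure {t | φ₂ (φ₁ t) ≠ t}
      ⊆ closure {t | φ₁ t ≠ t} ∪ closure {t | φ₂ t ≠ t} := by
    rw [← closure_union]
    exact closure_mono hsupp
  refine ⟨fun t => φ₂ (φ₁ t), fun t => ψ₁ (ψ₂ t), hφ₂.comp hφ₁, hψ₁.comp hψ₂,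
    fun t => by show ψ₁ (ψ₂ (φ₂ (φ₁ t))) = t; rw [hψφ₂, hψφ₁],
    fun t => by show φ₂ (φ₁ (ψ₁ (ψ₂ t))) = t; rw [hφψ₁, hφψ₂],
    by show φ₂ (φ₁ x) = z; rw [h₁, h₂],
    (hcpt₁.union hcpt₂).of_isClosed_subset isClosed_closure hc,
    hc.trans (Set.union_subset hsub₁ hsub₂), ?_⟩
  intro t u v
  have hcomp : fderiv ℝ (fun s => φ₂ (φ₁ s)) t
      = (fderiv ℝ φ₂ (φ₁ t)).comp (fderiv ℝ φ₁ t) :=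
    fderiv_comp t (hφd₂ _) (hφd₁ _)
  rw [hcomp]
  simp only [ContinuousLinearMap.coe_comp', Function.comp_apply]
  rw [hω₂, hω₁]

lemma P_step (U : Set (E n)) (hUopen : IsOpen U) (y : E n) (hy : y ∈ U) :
    ∃ ε > 0, ∀ z, dist z y < ε → P n U y z := by
  obtain ⟨r, hr, hball⟩ := Metric.isOpen_iff.mp hUopen y hy
  set δ := r / 2 with hδdef
  have hδ : 0 < δ := by positivity
  have hcb : Metric.closedBall y δ ⊆ U :=
    (Metric.closedBall_subset_ball (by simp only [hδdef]; linarith)).trans hball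
  refine ⟨δ / (2 * (n + 1)), by positivity, ?_⟩
  intro z hdist
  by_cases hzy : z = y
  · rw [hzy]; exact P_refl U y
  -- bound on Q (z - y)
  have hQzy : Q (z - y) ≤ δ ^ 2 / 8 := by
    have hn : (0:ℝ) ≤ (n:ℝ) := Nat.cast_nonneg n
    have h1 : ‖z - y‖ ≤ δ / (2 * (n + 1)) := le_of_lt (by rwa [← dist_eq_norm])
    have h2 : Q (z - y) ≤ 2 * n * (‖z - y‖ * ‖z - y‖) := Q_le_norm _
    have h3 : ‖z - y‖ * ‖z - y‖ ≤ (δ / (2 * (n + 1))) * (δ / (2 * (n + 1))) :=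
      mul_le_mul h1 h1 (norm_nonneg _) (by positivity)
    have h4 : 2 * (n:ℝ) * ((δ / (2 * (n + 1))) * (δ / (2 * (n + 1)))) ≤ δ ^ 2 / 8 := by
      rw [div_mul_div_comm, ← mul_div_assoc, div_le_div_iff₀ (by positivity) (by norm_num)]
      nlinarith [sq_nonneg ((n:ℝ) - 1), mul_self_nonneg δ, hn,
        mul_nonneg (mul_nonneg hn hn) (mul_self_nonneg δ)]
    nlinarith [mul_le_mul_of_nonneg_left h3 (by positivity : (0:ℝ) ≤ 2 * (n:ℝ))]
  set c : E n := (2:ℝ)⁻¹ • (y + z) with hcdef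
  have hyc : y - c = (2:ℝ)⁻¹ • (y - z) := by rw [hcdef]; module
  set s₀ := Q (y - c) with hs₀def
  have hs₀pos : 0 < s₀ := by
    refine Q_pos _ ?_
    rw [hyc]
    intro hcon
    apply hzy
    have := congrArg (fun w : E n => (2:ℝ) • w) hcon
    simp only [smul_smul, smul_zero] at this
    norm_num at this
    exact (sub_eq_zero.mp this).symm
  have hs₀val : s₀ = Q (z - y) / 4 := by
    rw [hs₀def, hyc, Q_smul]
    have : Q (y - z) = Q (z - y) := by
      have : y - z = (-1 : ℝ) • (z - y) := by module
      rw [this, Q_smul]; ring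
    rw [this]; ring
  have hs₀le : s₀ ≤ δ ^ 2 / 32 := by rw [hs₀val]; linarith
  -- sqrt bounds
  have hsqrt_s₀ : Real.sqrt s₀ ≤ δ / 4 := by
    have h1 : s₀ ≤ (δ / 4) ^ 2 := by nlinarith
    calc Real.sqrt s₀ ≤ Real.sqrt ((δ / 4) ^ 2) := Real.sqrt_le_sqrt h1
      _ = δ / 4 := Real.sqrt_sq (by positivity)
  have hsqrt_S : Real.sqrt (2 * s₀) ≤ δ / 2 := by
    have h1 : 2 * s₀ ≤ (δ / 2) ^ 2 := by nlinarith
    calc Real.sqrt (2 * s₀) ≤ Real.sqrt ((δ / 2) ^ 2) := Real.sqrt_le_sqrt h1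
      _ = δ / 2 := Real.sqrt_sq (by positivity)
  -- the bump function
  set bump : ContDiffBump s₀ := ⟨s₀ / 2, s₀, by positivity, by linarith⟩ with hbdef
  set g : ℝ → ℝ := fun s => Real.pi * bump s with hgdef
  have hg : ContDiff ℝ (⊤ : ℕ∞) g := contDiff_const.mul bump.contDiff
  have hgneg : ContDiff ℝ (⊤ : ℕ∞) (fun s => -(g s)) := hg.neg
  have hgs₀ : g s₀ = Real.pi := by
    rw [hgdef]
    simp only
    rw [bump.one_of_mem_closedBall (Metric.mem_closedBall_self (by positivity)), mul_one]
  have hgsupp : ∀ s, ¬ (s ∈ Metric.ball s₀ s₀) → g s = 0 := by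
    intro s hs
    have : bump s = 0 := by
      have hsup := bump.support_eq
      have : s ∉ Function.support bump := by
        rw [hsup]
        exact hs
      exact Function.notMem_support.mp this
    rw [hgdef]
    simp only [this, mul_zero]
  -- the twist maps
  refine ⟨twist g c, twist (fun s => -(g s)) c, contDiff_twist g hg c,
    contDiff_twist _ hgneg c, fun x => twist_inv g _ (fun s => rfl) c x,
    fun x => ?_, ?_, ?_, ?_, twist_omega g hg c⟩
  · exact twist_inv (fun s => -(g s)) g (fun s => (neg_neg (g s)).symm) c x
  · -- twist g c y = z
    unfold twist
    rw [← hs₀def, hgs₀, rot_pi]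
    rw [hcdef, hyc]
    module
  · -- compactness
    have hsub : {x | twist g c x ≠ x} ⊆ Metric.closedBall c (Real.sqrt (2 * s₀)) := by
      intro x hx
      simp only [Set.mem_setOf_eq] at hx
      have hQx : Q (x - c) ∈ Metric.ball s₀ s₀ := by
        by_contra hcon
        exact hx (twist_eq_self g c x (hgsupp _ hcon))
      have hQlt : Q (x - c) < 2 * s₀ := by
        rw [Metric.mem_ball, Real.dist_eq] at hQx
        have := abs_lt.mp hQx
        linarith [this.1, this.2]
      rw [Metric.mem_closedBall, dist_eq_norm]
      calc ‖x - c‖ ≤ Real.sqrt (Q (x - c)) := norm_le_sqrt_Q _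
        _ ≤ Real.sqrt (2 * s₀) := Real.sqrt_le_sqrt (le_of_lt hQlt)
    exact (isCompact_closedBall c _).of_isClosed_subset isClosed_closure
      (closure_minimal hsub Metric.isClosed_closedBall)
  · -- support inside U
    have hsub : {x | twist g c x ≠ x} ⊆ Metric.closedBall c (Real.sqrt (2 * s₀)) := by
      intro x hx
      simp only [Set.mem_setOf_eq] at hx
      have hQx : Q (x - c) ∈ Metric.ball s₀ s₀ := by
        by_contra hcon
        exact hx (twist_eq_self g c x (hgsupp _ hcon))
      have hQlt : Q (x - c) < 2 * s₀ := by
        rw [Metric.mem_ball, Real.dist_eq] at hQx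
        have := abs_lt.mp hQx
        linarith [this.1, this.2]
      rw [Metric.mem_closedBall, dist_eq_norm]
      calc ‖x - c‖ ≤ Real.sqrt (Q (x - c)) := norm_le_sqrt_Q _
        _ ≤ Real.sqrt (2 * s₀) := Real.sqrt_le_sqrt (le_of_lt hQlt)
    have hBU : Metric.closedBall c (Real.sqrt (2 * s₀)) ⊆ U := by
      intro x hx
      apply hcb
      rw [Metric.mem_closedBall, dist_eq_norm] at hx ⊢
      have hcy : ‖c - y‖ ≤ δ / 4 := by
        have : c - y = -(y - c) := by module
        rw [this, norm_neg]
        calc ‖y - c‖ ≤ Real.sqrt (Q (y - c)) := norm_le_sqrt_Q _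
          _ = Real.sqrt s₀ := by rw [hs₀def]
          _ ≤ δ / 4 := hsqrt_s₀
      calc ‖x - y‖ ≤ ‖x - c‖ + ‖c - y‖ := norm_sub_le_norm_sub_add_norm_sub x c y
        _ ≤ Real.sqrt (2 * s₀) + δ / 4 := add_le_add hx hcy
        _ ≤ δ / 2 + δ / 4 := by linarith
        _ ≤ δ := by linarith
    exact (closure_minimal hsub Metric.isClosed_closedBall).trans hBU

end SympAux


open SympAux

/-- symplectomorphisms act transitively on any two points of a convex open
set `U ⊆ ℝ^{2n}`: there is a `C^∞` diffeomorphism `φ` of `ℝ^{2n}` with `φ(y) = z`, whose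
support `{x : φ(x) ≠ x}` has compact closure contained in `U`, and whose derivative
preserves `ω₀` at every point. -/
theorem symplectomorphisms_transitive (n : ℕ) (hn : 1 ≤ n)
    (U : Set ((Fin n → ℝ) × (Fin n → ℝ))) (hUopen : IsOpen U) (hUconv : Convex ℝ U)
    (y z : (Fin n → ℝ) × (Fin n → ℝ)) (hy : y ∈ U) (hz : z ∈ U) :
    ∃ φ ψ : ((Fin n → ℝ) × (Fin n → ℝ)) → ((Fin n → ℝ) × (Fin n → ℝ)),
      ContDiff ℝ (⊤ : ℕ∞) φ ∧ ContDiff ℝ (⊤ : ℕ∞) ψ ∧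
      (∀ x, ψ (φ x) = x) ∧ (∀ x, φ (ψ x) = x) ∧
      φ y = z ∧
      IsCompact (closure {x | φ x ≠ x}) ∧ closure {x | φ x ≠ x} ⊆ U ∧
      (∀ x u v, omega0 n (fderiv ℝ φ x u) (fderiv ℝ φ x v) = omega0 n u v) := by
  have main : P n U y z := by
    set V : Set (E n) := {w | w ∈ U ∧ P n U y w} with hVdef
    set W : Set (E n) := {w | w ∈ U ∧ ¬ P n U y w} with hWdef
    have hVopen : IsOpen V := by
      rw [Metric.isOpen_iff]
      intro w hw
      obtain ⟨hwU, hPw⟩ := hw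
      obtain ⟨ε, hε, hstep⟩ := P_step U hUopen w hwU
      obtain ⟨r, hr, hball⟩ := Metric.isOpen_iff.mp hUopen w hwU
      refine ⟨min ε r, lt_min hε hr, ?_⟩
      intro w' hw'
      rw [Metric.mem_ball] at hw'
      have hw'U : w' ∈ U := hball (Metric.mem_ball.mpr (lt_of_lt_of_le hw' (min_le_right _ _)))
      have hPww' : P n U w w' := hstep w' (lt_of_lt_of_le hw' (min_le_left _ _))
      exact ⟨hw'U, P_trans U y w w' hPw hPww'⟩
    have hWopen : IsOpen W := by
      rw [Metric.isOpen_iff]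
      intro w hw
      obtain ⟨hwU, hPw⟩ := hw
      obtain ⟨ε, hε, hstep⟩ := P_step U hUopen w hwU
      obtain ⟨r, hr, hball⟩ := Metric.isOpen_iff.mp hUopen w hwU
      refine ⟨min ε r, lt_min hε hr, ?_⟩
      intro w' hw'
      rw [Metric.mem_ball] at hw'
      have hw'U : w' ∈ U := hball (Metric.mem_ball.mpr (lt_of_lt_of_le hw' (min_le_right _ _)))
      have hPww' : P n U w w' := hstep w' (lt_of_lt_of_le hw' (min_le_left _ _))
      refine ⟨hw'U, fun hPyw' => hPw ?_⟩
      exact P_trans U y w' w hPyw' (P_symm U w w' hPww')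
    by_contra hnot
    have hsub : U ⊆ V ∪ W := by
      intro w hw
      by_cases h : P n U y w
      · exact Or.inl ⟨hw, h⟩
      · exact Or.inr ⟨hw, h⟩
    have hpre := hUconv.isPreconnected
    have hVne : (U ∩ V).Nonempty := ⟨y, hy, hy, P_refl U y⟩
    have hWne : (U ∩ W).Nonempty := ⟨z, hz, hz, hnot⟩
    obtain ⟨x, hxU, hxV, hxW⟩ := hpre V W hVopen hWopen hsub hVne hWne
    exact hxW.2 hxV.2
  exact main
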